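/- Let k ≥ 1 be an integer, H ∈ (0,1), ε ∈ (0,1) with ⌈1/H⌉Hε < 1, and let x_0,…,x_{2M} be the Durán mesh. Let I be an interpolation operator satisfying the per-cell estimates with constant C₀, and let S ∈ C^{k+1}([0,2]) satisfy ‖S^{(k+1)}‖_{L²(0,1)} ≤ 1 and ‖S^{(k+1)}‖_{L²(1,2)} ≤ 1. Then there is a constant C = C(k,C₀), independent of ε and H, with ‖S − IS‖_{L²(0,2)} ≤ C H^{k+1} and ‖(S − IS)'‖_{L²(0,2)} ≤ C H^{k}. -/
import Mathlib


open MeasureTheory Set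

/-- L² norm of `f` on the interval `(a,b)`. -/
noncomputable def l2norm (f : ℝ → ℝ) (a b : ℝ) : ℝ :=
  Real.sqrt (∫ x in a..b, (f x) ^ 2)

/-- `L = ⌈1/H⌉`. -/
noncomputable def mL (H : ℝ) : ℕ := ⌈1 / H⌉₊

/-- `M = ⌈L − ln(HεL)/ln(1+H)⌉`. -/
noncomputable def mM (H ε : ℝ) : ℕ :=
  ⌈(mL H : ℝ) - Real.log (H * ε * mL H) / Real.log (1 + H)⌉₊

/-- Durán mesh points on `[0,1]`: `x_0 = 0`, `x_i = iHε` for `i ≤ L`,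
`x_i = (1+H) x_{i-1}` for `L < i ≤ M-1` (closed form `HεL(1+H)^{i-L}`), `x_M = 1`. -/
noncomputable def duranX0 (H ε : ℝ) (i : ℕ) : ℝ :=
  if i ≤ mL H then (i : ℝ) * H * ε
  else if i < mM H ε then H * ε * (mL H : ℝ) * (1 + H) ^ (i - mL H)
  else 1

/-- Durán mesh points on `[0,2]`: `x_{M+i} = 1 + x_i`. -/
noncomputable def duranX (H ε : ℝ) (i : ℕ) : ℝ :=
  if i ≤ mM H ε then duranX0 H ε i else 1 + duranX0 H ε (i - mM H ε)

/-- Durán mesh cell widths `h_i = x_i − x_{i-1}`. -/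
noncomputable def duranH (H ε : ℝ) (i : ℕ) : ℝ :=
  duranX H ε i - duranX H ε (i - 1)
/-- Per-cell interpolation error estimates for an interpolation operator `I` on the mesh
with nodes `X 0 < X 1 < … < X N`, with constant `C0` and polynomial degree `k`:
`‖v − Iv‖_{L²(τ_i)} ≤ C0 h_i^s ‖v^{(s)}‖_{L²(τ_i)}` for `1 ≤ s ≤ k+1` and
`‖(v − Iv)'‖_{L²(τ_i)} ≤ C0 h_i^t ‖v^{(t+1)}‖_{L²(τ_i)}` for `1 ≤ t ≤ k`. -/
def PerCell (k : ℕ) (C0 : ℝ) (X : ℕ → ℝ) (N : ℕ) (I : (ℝ → ℝ) → ℝ → ℝ) : Prop :=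
  ∀ v : ℝ → ℝ, ContDiff ℝ (k + 1) v → ∀ i : ℕ, 1 ≤ i → i ≤ N →
    (∀ s : ℕ, 1 ≤ s → s ≤ k + 1 →
      l2norm (fun y => v y - I v y) (X (i - 1)) (X i) ≤
        C0 * (X i - X (i - 1)) ^ s * l2norm (iteratedDeriv s v) (X (i - 1)) (X i)) ∧
    (∀ t : ℕ, 1 ≤ t → t ≤ k →
      l2norm (deriv (fun y => v y - I v y)) (X (i - 1)) (X i) ≤
        C0 * (X i - X (i - 1)) ^ t * l2norm (iteratedDeriv (t + 1) v) (X (i - 1)) (X i))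

section mesh
variable {H ε : ℝ} (hH : H ∈ Set.Ioo (0:ℝ) 1) (hε : ε ∈ Set.Ioo (0:ℝ) 1)
  (hLt : H * ε * mL H < 1)

include hH in
lemma mL_pos : 1 ≤ mL H := Nat.ceil_pos.mpr (div_pos one_pos hH.1)

include hH hε in
lemma a_pos : 0 < H * ε * mL H := by
  have h1 := mL_pos (H := H) hH
  have h2 : (0:ℝ) < (mL H : ℝ) := by exact_mod_cast Nat.lt_of_lt_of_le Nat.zero_lt_one h1
  have := hH.1; have := hε.1
  positivity

include hH hε hLt in
lemma logdiv_neg : Real.log (H * ε * mL H) / Real.log (1 + H) < 0 :=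
  div_neg_of_neg_of_pos (Real.log_neg (a_pos hH hε) hLt) (Real.log_pos (by linarith [hH.1]))

include hH hε hLt in
lemma L_lt_M : mL H < mM H ε := by
  apply Nat.lt_ceil.mpr
  linarith [logdiv_neg hH hε hLt]

include hH hε hLt in
lemma geo_lt_one : H * ε * mL H * (1 + H) ^ (mM H ε - 1 - mL H) < 1 := by
  have ha := a_pos hH hε
  have hM := L_lt_M hH hε hLt
  have hdn := logdiv_neg hH hε hLt
  have hlog2 : 0 < Real.log (1 + H) := Real.log_pos (by linarith [hH.1])
  set a := H * ε * mL H with hadef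
  set L := mL H; set M := mM H ε
  have hceil : (M:ℝ) < ((L : ℝ) - Real.log a / Real.log (1 + H)) + 1 := by
    apply Nat.ceil_lt_add_one
    have hL0 : (0:ℝ) ≤ L := Nat.cast_nonneg _
    linarith
  have hcast : ((M - 1 - L : ℕ) : ℝ) = (M:ℝ) - 1 - L := by
    have h1 : L ≤ M - 1 := by omega
    have h2 : 1 ≤ M := by omega
    push_cast [Nat.cast_sub h1, Nat.cast_sub h2]
    ring
  have key : ((M - 1 - L : ℕ) : ℝ) * Real.log (1 + H) < -Real.log a := by
    rw [hcast]
    have h3 : (M:ℝ) - 1 - L < -(Real.log a / Real.log (1 + H)) := by linarith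
    calc ((M:ℝ) - 1 - L) * Real.log (1+H)
        < -(Real.log a / Real.log (1+H)) * Real.log (1+H) :=
          mul_lt_mul_of_pos_right h3 hlog2
      _ = -Real.log a := by field_simp
  have h1H : (0:ℝ) < 1 + H := by linarith [hH.1]
  have hne : ((1+H:ℝ))^(M-1-L) ≠ 0 := ne_of_gt (pow_pos h1H _)
  have hpow : Real.log (a * (1+H)^(M-1-L)) < Real.log 1 := by
    rw [Real.log_mul (ne_of_gt ha) hne, Real.log_pow, Real.log_one]
    linarith
  have hprod : (0:ℝ) < a * (1+H)^(M-1-L) := mul_pos ha (pow_pos h1H _)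
  exact (Real.log_lt_log_iff hprod one_pos).mp hpow

include hH hε hLt in
lemma geo_ge_one : 1 ≤ H * ε * mL H * (1 + H) ^ (mM H ε - mL H) := by
  have ha := a_pos hH hε
  have hM := L_lt_M hH hε hLt
  have hlog2 : 0 < Real.log (1 + H) := Real.log_pos (by linarith [hH.1])
  set a := H * ε * mL H with hadef
  set L := mL H; set M := mM H ε
  have hle : ((L : ℝ) - Real.log a / Real.log (1 + H)) ≤ M := Nat.le_ceil _
  have hcast : ((M - L : ℕ) : ℝ) = (M:ℝ) - L := by
    push_cast [Nat.cast_sub (le_of_lt hM)]; ring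
  have key : -Real.log a ≤ ((M - L : ℕ) : ℝ) * Real.log (1 + H) := by
    rw [hcast]
    have h1 : -(Real.log a / Real.log (1+H)) ≤ (M:ℝ) - L := by linarith
    calc -Real.log a = -(Real.log a / Real.log (1+H)) * Real.log (1+H) := by field_simp
      _ ≤ ((M:ℝ) - L) * Real.log (1+H) := mul_le_mul_of_nonneg_right h1 (le_of_lt hlog2)
  have h1H : (0:ℝ) < 1 + H := by linarith [hH.1]
  have hne : ((1+H:ℝ))^(M-L) ≠ 0 := ne_of_gt (pow_pos h1H _)
  have hpow : Real.log 1 ≤ Real.log (a * (1+H)^(M-L)) := by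
    rw [Real.log_mul (ne_of_gt ha) hne, Real.log_pow, Real.log_one]
    linarith
  have hprod : (0:ℝ) < a * (1+H)^(M-L) := mul_pos ha (pow_pos h1H _)
  exact (Real.log_le_log_iff one_pos hprod).mp hpow


include hH hε hLt in
lemma closed_form : ∀ i, mL H ≤ i → i < mM H ε →
    duranX0 H ε i = H * ε * mL H * (1 + H) ^ (i - mL H) := by
  intro i hLi hiM
  by_cases hiL : i ≤ mL H
  · have : i = mL H := le_antisymm hiL hLi
    subst this
    simp [duranX0, hiL]
    ring
  · simp [duranX0, hiL, hiM]

lemma duranX0_zero : duranX0 H ε 0 = 0 := by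
  simp [duranX0]

include hH hε hLt in
lemma duranX0_M : duranX0 H ε (mM H ε) = 1 := by
  have hM := L_lt_M hH hε hLt
  have h1 : ¬ (mM H ε ≤ mL H) := by omega
  rw [duranX0, if_neg h1, if_neg (lt_irrefl _)]

include hH hε hLt in
lemma duranX0_cell : ∀ i, 1 ≤ i → i ≤ mM H ε →
    duranX0 H ε (i-1) ≤ duranX0 H ε i ∧ duranX0 H ε i - duranX0 H ε (i-1) ≤ H := by
  have hH0 := hH.1; have hH1 := hH.2; have hε0 := hε.1; have hε1 := hε.2
  have ha := a_pos hH hε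
  have hM := L_lt_M hH hε hLt
  have h1H : (0:ℝ) < 1 + H := by linarith
  intro i h1 hiM
  by_cases hiL : i ≤ mL H
  · have hi1 : i - 1 ≤ mL H := by omega
    simp only [duranX0, if_pos hiL, if_pos hi1]
    have hc : ((i-1:ℕ):ℝ) = (i:ℝ) - 1 := by push_cast [Nat.cast_sub h1]; ring
    rw [hc]
    constructor
    · nlinarith
    · nlinarith
  · by_cases hiM' : i < mM H ε
    · have e1 : duranX0 H ε i = H * ε * mL H * (1 + H) ^ (i - mL H) :=
        closed_form hH hε hLt i (by omega) hiM'
      have e2 : duranX0 H ε (i-1) = H * ε * mL H * (1 + H) ^ (i - 1 - mL H) :=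
        closed_form hH hε hLt (i-1) (by omega) (by omega)
      have epow : (1+H:ℝ) ^ (i - mL H) = (1+H) ^ (i - 1 - mL H) * (1+H) := by
        rw [← pow_succ]
        congr 1
        omega
      have hz : (0:ℝ) < H * ε * mL H * (1 + H) ^ (i - 1 - mL H) :=
        mul_pos ha (pow_pos h1H _)
      have hzle : H * ε * mL H * (1 + H) ^ (i - 1 - mL H) ≤ 1 := by
        have hmono : (1+H:ℝ) ^ (i - 1 - mL H) ≤ (1+H) ^ (mM H ε - 1 - mL H) :=
          pow_le_pow_right₀ (by linarith) (by omega)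
        have := geo_lt_one hH hε hLt
        nlinarith
      rw [e1, e2, epow]
      constructor
      · nlinarith
      · nlinarith
    · have hi : i = mM H ε := by omega
      subst hi
      have e1 : duranX0 H ε (mM H ε) = 1 := duranX0_M hH hε hLt
      have e2 : duranX0 H ε (mM H ε - 1) = H * ε * mL H * (1 + H) ^ (mM H ε - 1 - mL H) :=
        closed_form hH hε hLt _ (by omega) (by omega)
      have hz : (0:ℝ) < H * ε * mL H * (1 + H) ^ (mM H ε - 1 - mL H) :=
        mul_pos ha (pow_pos h1H _)
      have hzlt := geo_lt_one hH hε hLt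
      have hge := geo_ge_one hH hε hLt
      have epow : (1+H:ℝ) ^ (mM H ε - mL H) = (1+H) ^ (mM H ε - 1 - mL H) * (1+H) := by
        rw [← pow_succ]
        congr 1
        omega
      rw [epow] at hge
      rw [e1, e2]
      constructor
      · nlinarith
      · nlinarith

include hH hε hLt in
lemma duranX_zero : duranX H ε 0 = 0 := by
  simp [duranX, duranX0]

include hH hε hLt in
lemma duranX_2M : duranX H ε (2 * mM H ε) = 2 := by
  have hM := L_lt_M hH hε hLt
  have hM1 : 1 ≤ mM H ε := by omega
  have h2 : ¬ (2 * mM H ε ≤ mM H ε) := by omega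
  rw [duranX, if_neg h2, show 2 * mM H ε - mM H ε = mM H ε by omega, duranX0_M hH hε hLt]
  norm_num

include hH hε hLt in
lemma duranX_cell : ∀ i, 1 ≤ i → i ≤ 2 * mM H ε →
    duranX H ε (i-1) ≤ duranX H ε i ∧ duranX H ε i - duranX H ε (i-1) ≤ H := by
  intro i h1 hi2M
  by_cases hi : i ≤ mM H ε
  · have h' : i - 1 ≤ mM H ε := by omega
    simp only [duranX, if_pos hi, if_pos h']
    exact duranX0_cell hH hε hLt i h1 hi
  · have eI : duranX H ε i = 1 + duranX0 H ε (i - mM H ε) := by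
      rw [duranX, if_neg hi]
    have eI1 : duranX H ε (i-1) = 1 + duranX0 H ε (i - 1 - mM H ε) := by
      by_cases h' : i - 1 ≤ mM H ε
      · have hthis : i - 1 = mM H ε := by omega
        rw [duranX, hthis, if_pos (le_refl _), duranX0_M hH hε hLt,
          show mM H ε - mM H ε = 0 by omega, duranX0_zero]
        norm_num
      · rw [duranX, if_neg h']
    have hkey := duranX0_cell hH hε hLt (i - mM H ε) (by omega) (by omega)
    rw [show i - mM H ε - 1 = i - 1 - mM H ε by omega] at hkey
    rw [eI, eI1]
    constructor
    · linarith [hkey.1]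
    · linarith [hkey.2]

include hH hε hLt in
lemma duranX_mono : ∀ i j, i ≤ j → j ≤ 2 * mM H ε → duranX H ε i ≤ duranX H ε j := by
  intro i j hij hj
  induction j with
  | zero => simp_all
  | succ n ih =>
    rcases Nat.lt_or_ge i (n+1) with h | h
    · have step := (duranX_cell hH hε hLt (n+1) (by omega) hj).1
      simp only [Nat.add_sub_cancel] at step
      exact le_trans (ih (by omega) (by omega)) step
    · have : i = n + 1 := by omega
      simp [this]

include hH hε hLt in
lemma duranX_mem : ∀ i, i ≤ 2 * mM H ε → 0 ≤ duranX H ε i ∧ duranX H ε i ≤ 2 := by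
  intro i hi
  constructor
  · have := duranX_mono hH hε hLt 0 i (by omega) hi
    rw [duranX_zero hH hε hLt] at this
    exact this
  · have := duranX_mono hH hε hLt i (2 * mM H ε) hi (le_refl _)
    rw [duranX_2M hH hε hLt] at this
    exact this

end mesh

lemma sum_l2 {f G : ℝ → ℝ} (N : ℕ) (X : ℕ → ℝ)
    (hX0 : X 0 = 0) (hXN : X N = 2)
    (hmono : ∀ i j, i ≤ j → j ≤ N → X i ≤ X j)
    (hG : Continuous G)
    (B : ℝ) (hB : 0 ≤ B)
    (hcell : ∀ i, i < N → l2norm f (X i) (X (i+1)) ≤ B * l2norm G (X i) (X (i+1)))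
    (hGbound : (∫ x in (0:ℝ)..2, (G x)^2) ≤ 2) :
    l2norm f 0 2 ≤ B * Real.sqrt 2 := by
  rw [l2norm]
  by_cases hint : IntervalIntegrable (fun y => (f y)^2) volume 0 2
  · have hstep : ∀ i, i < N → X i ≤ X (i+1) := fun i hi => hmono i (i+1) (by omega) hi
    have hrange : ∀ i, i ≤ N → 0 ≤ X i ∧ X i ≤ 2 := by
      intro i hi
      exact ⟨hX0 ▸ hmono 0 i (by omega) hi, hXN ▸ hmono i N hi (le_refl _)⟩
    have hsub : ∀ i < N, IntervalIntegrable (fun y => (f y)^2) volume (X i) (X (i+1)) := by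
      intro i hi
      apply hint.mono_set
      rw [Set.uIcc_of_le (hstep i hi), Set.uIcc_of_le (by norm_num : (0:ℝ) ≤ 2)]
      exact Set.Icc_subset_Icc (hrange i (by omega)).1 (hrange (i+1) hi).2
    have hGint : ∀ (a b : ℝ), IntervalIntegrable (fun y => (G y)^2) volume a b :=
      fun a b => ((hG.pow 2).intervalIntegrable a b)
    have hsumf : ∑ i ∈ Finset.range N, ∫ x in X i..X (i+1), (f x)^2
        = ∫ x in (X 0)..(X N), (f x)^2 :=
      intervalIntegral.sum_integral_adjacent_intervals hsub
    have hsumG : ∑ i ∈ Finset.range N, ∫ x in X i..X (i+1), (G x)^2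
        = ∫ x in (X 0)..(X N), (G x)^2 :=
      intervalIntegral.sum_integral_adjacent_intervals (fun i _ => hGint _ _)
    have hcell2 : ∀ i ∈ Finset.range N,
        (∫ x in X i..X (i+1), (f x)^2) ≤ B^2 * ∫ x in X i..X (i+1), (G x)^2 := by
      intro i hi
      rw [Finset.mem_range] at hi
      have hA : 0 ≤ ∫ x in X i..X (i+1), (f x)^2 :=
        intervalIntegral.integral_nonneg (hstep i hi) (fun u _ => sq_nonneg _)
      have hC : 0 ≤ ∫ x in X i..X (i+1), (G x)^2 :=
        intervalIntegral.integral_nonneg (hstep i hi) (fun u _ => sq_nonneg _)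
      have h := hcell i hi
      rw [l2norm, l2norm] at h
      nlinarith [Real.sq_sqrt hA, Real.sq_sqrt hC, Real.sqrt_nonneg (∫ x in X i..X (i+1), (f x)^2),
        Real.sqrt_nonneg (∫ x in X i..X (i+1), (G x)^2),
        mul_le_mul_of_nonneg_left h (mul_nonneg hB (Real.sqrt_nonneg (∫ x in X i..X (i+1), (G x)^2))),
        Real.sqrt_nonneg (∫ x in X i..X (i+1), (f x)^2)]
    have htotal : (∫ x in (0:ℝ)..2, (f x)^2) ≤ B^2 * 2 := by
      have h1 : (∫ x in (0:ℝ)..2, (f x)^2) = ∑ i ∈ Finset.range N, ∫ x in X i..X (i+1), (f x)^2 := by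
        rw [hsumf, hX0, hXN]
      have h2 : ∑ i ∈ Finset.range N, ∫ x in X i..X (i+1), (f x)^2
          ≤ B^2 * ∑ i ∈ Finset.range N, ∫ x in X i..X (i+1), (G x)^2 := by
        rw [Finset.mul_sum]
        exact Finset.sum_le_sum hcell2
      have h3 : ∑ i ∈ Finset.range N, ∫ x in X i..X (i+1), (G x)^2 ≤ 2 := by
        rw [hsumG, hX0, hXN]; exact hGbound
      nlinarith [sq_nonneg B]
    calc Real.sqrt (∫ x in (0:ℝ)..2, (f x)^2) ≤ Real.sqrt (B^2 * 2) := Real.sqrt_le_sqrt htotal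
      _ = B * Real.sqrt 2 := by
          rw [Real.sqrt_mul (sq_nonneg B), Real.sqrt_sq hB]
  · rw [intervalIntegral.integral_undef hint, Real.sqrt_zero]
    positivity

/-- Interpolation estimates for the smooth part `S` on the Durán mesh:
`‖S − IS‖_{L²(0,2)} ≤ C H^{k+1}` and `‖(S − IS)'‖_{L²(0,2)} ≤ C H^k`
with `C = C(k,C₀)` independent of `ε` and `H`. -/
theorem smooth_part_interpolation (k : ℕ) (hk : 1 ≤ k) (C0 : ℝ) (hC0 : 0 ≤ C0) :
    ∃ C : ℝ, 0 < C ∧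
      ∀ H ε : ℝ, H ∈ Set.Ioo (0:ℝ) 1 → ε ∈ Set.Ioo (0:ℝ) 1 → H * ε * mL H < 1 →
      ∀ I : (ℝ → ℝ) → ℝ → ℝ, PerCell k C0 (duranX H ε) (2 * mM H ε) I →
      ∀ S : ℝ → ℝ, ContDiff ℝ (k + 1) S →
        l2norm (iteratedDeriv (k + 1) S) 0 1 ≤ 1 →
        l2norm (iteratedDeriv (k + 1) S) 1 2 ≤ 1 →
        l2norm (fun y => S y - I S y) 0 2 ≤ C * H ^ (k + 1) ∧
        l2norm (deriv (fun y => S y - I S y)) 0 2 ≤ C * H ^ k := by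

  refine ⟨Real.sqrt 2 * C0 + 1, by positivity, ?_⟩
  intro H ε hH hε hLt I hPC S hS hS1 hS2
  set G := iteratedDeriv (k+1) S with hGdef
  have hGcont : Continuous G := hS.continuous_iteratedDeriv _ (le_refl _)
  have hGi : ∀ a b : ℝ, IntervalIntegrable (fun y => (G y)^2) volume a b :=
    fun a b => (hGcont.pow 2).intervalIntegrable a b
  have hG01 : (∫ x in (0:ℝ)..1, (G x)^2) ≤ 1 := by
    have hA : 0 ≤ ∫ x in (0:ℝ)..1, (G x)^2 :=
      intervalIntegral.integral_nonneg (by norm_num) (fun u _ => sq_nonneg _)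
    rw [l2norm] at hS1
    nlinarith [Real.sq_sqrt hA, Real.sqrt_nonneg (∫ x in (0:ℝ)..1, (G x)^2)]
  have hG12 : (∫ x in (1:ℝ)..2, (G x)^2) ≤ 1 := by
    have hA : 0 ≤ ∫ x in (1:ℝ)..2, (G x)^2 :=
      intervalIntegral.integral_nonneg (by norm_num) (fun u _ => sq_nonneg _)
    rw [l2norm] at hS2
    nlinarith [Real.sq_sqrt hA, Real.sqrt_nonneg (∫ x in (1:ℝ)..2, (G x)^2)]
  have hGbound : (∫ x in (0:ℝ)..2, (G x)^2) ≤ 2 := by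
    rw [← intervalIntegral.integral_add_adjacent_intervals (hGi 0 1) (hGi 1 2)]
    linarith
  have hH0 := hH.1
  have main : ∀ (f : ℝ → ℝ) (m : ℕ),
      (∀ i : ℕ, 1 ≤ i → i ≤ 2 * mM H ε →
        l2norm f (duranX H ε (i-1)) (duranX H ε i) ≤
          C0 * (duranX H ε i - duranX H ε (i-1))^m *
            l2norm G (duranX H ε (i-1)) (duranX H ε i)) →
      l2norm f 0 2 ≤ (Real.sqrt 2 * C0 + 1) * H^m := by
    intro f m hcellf
    have hB : (0:ℝ) ≤ C0 * H^m := by positivity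
    have key : l2norm f 0 2 ≤ (C0 * H^m) * Real.sqrt 2 := by
      apply sum_l2 (2 * mM H ε) (duranX H ε) (duranX_zero hH hε hLt)
        (duranX_2M hH hε hLt) (duranX_mono hH hε hLt) hGcont _ hB _ hGbound
      intro i hi
      have h1 : 1 ≤ i + 1 := by omega
      have h2 : i + 1 ≤ 2 * mM H ε := by omega
      have hc := hcellf (i+1) h1 h2
      rw [Nat.add_sub_cancel] at hc
      have hcell := duranX_cell hH hε hLt (i+1) h1 h2
      rw [Nat.add_sub_cancel] at hcell
      have hd0 : 0 ≤ duranX H ε (i+1) - duranX H ε i := by linarith [hcell.1]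
      have hdH : duranX H ε (i+1) - duranX H ε i ≤ H := hcell.2
      have hpow : (duranX H ε (i+1) - duranX H ε i)^m ≤ H^m :=
        pow_le_pow_left₀ hd0 hdH m
      have hl2 : 0 ≤ l2norm G (duranX H ε i) (duranX H ε (i+1)) := Real.sqrt_nonneg _
      calc l2norm f (duranX H ε i) (duranX H ε (i+1))
          ≤ C0 * (duranX H ε (i+1) - duranX H ε i)^m *
              l2norm G (duranX H ε i) (duranX H ε (i+1)) := hc
        _ ≤ C0 * H^m * l2norm G (duranX H ε i) (duranX H ε (i+1)) := by
            apply mul_le_mul_of_nonneg_right _ hl2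
            apply mul_le_mul_of_nonneg_left hpow hC0
    have hHm : (0:ℝ) ≤ H^m := by positivity
    calc l2norm f 0 2 ≤ (C0 * H^m) * Real.sqrt 2 := key
      _ = (Real.sqrt 2 * C0) * H^m := by ring
      _ ≤ (Real.sqrt 2 * C0 + 1) * H^m := by nlinarith
  constructor
  · apply main (fun y => S y - I S y) (k+1)
    intro i h1 h2
    exact (hPC S hS i h1 h2).1 (k+1) (by omega) (le_refl _)
  · apply main (deriv (fun y => S y - I S y)) k
    intro i h1 h2
    exact (hPC S hS i h1 h2).2 k hk (le_refl _)
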